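/- arXiv:2209.06497 — 3 statements merged into one kernel-verified Lean document; each statement's English description precedes it below -/
import Mathlib

section
/- An abelian group is Higman-complete if and only if it is cotorsion. -/
universe u

/-- Evaluation of a word in two variables at `x` and `y` in a group. -/
def wordEval {G : Type*} [Group G] (w : FreeGroup Bool) (x y : G) : G :=
  FreeGroup.lift (fun b => if b then y else x) w

/-- A group `G` is Higman-complete if all systems `hᵢ = wᵢ(fᵢ, hᵢ₊₁)` are solvable. -/
def IsHigmanComplete (G : Type*) [Group G] : Prop :=
  ∀ (f : ℕ → G) (w : ℕ → FreeGroup Bool),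
    ∃ h : ℕ → G, ∀ i, h i = wordEval (w i) (f i) (h (i + 1))

/-- An abelian group `A` is cotorsion: every extension of `A` by a torsion-free
abelian group splits, i.e. whenever `A` embeds in `B` with torsion-free quotient,
the embedding admits a retraction (so `A` is a direct summand). -/
def IsCotorsion (A : Type u) [AddCommGroup A] : Prop :=
  ∀ (B : Type u) [AddCommGroup B] (i : A →+ B), Function.Injective i →
    (∀ g : B ⧸ i.range, g ≠ 0 → ¬IsOfFinAddOrder g) →
    ∃ r : B →+ A, r.comp i = AddMonoidHom.id A

/-!
In an abelian group a word `w(x, y)` evaluates to `x ^ p * y ^ q`, so Higman-completeness of `A`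
says exactly that every system `hᵢ = aᵢ + nᵢ • hᵢ₊₁` has a solution in `A`.

If `A` is cotorsion, such a system is solved by extending `eᵢ ↦ aᵢ` along the embedding
`eᵢ ↦ eᵢ - nᵢ • eᵢ₊₁` of `ℕ →₀ ℤ` into itself, whose cokernel (the direct limit of `ℤ → ℤ → ⋯`
under multiplication by the `nᵢ`) is torsion-free.

Conversely, let `A ≤ B` with `B / A` torsion-free and take by Zorn a maximal homomorphism
`ρ : D → A` retracting `A`, defined on a pure subgroup `D` of `B`. If `b₀ ∉ D`, the pure closure of
`b₀` in the torsion-free group `B / D` is countable of rank one, hence the union of a chain of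
cyclic groups `⟨yₖ⟩` with `yₖ = cₖ • yₖ₊₁`. Lifting `yₖ` to `tₖ ∈ B` and solving
`hₖ = ρ (tₖ - cₖ • tₖ₊₁) + cₖ • hₖ₊₁` extends `ρ` by `tₖ ↦ hₖ` to a larger pure subgroup.
-/

open Function

theorem exists_wordEval_eq_zpow_mul_zpow {G : Type*} [CommGroup G] (w : FreeGroup Bool) :
    ∃ p q : ℤ, ∀ x y : G, wordEval w x y = x ^ p * y ^ q := by
  induction w using FreeGroup.induction_on with
  | C1 => exact ⟨0, 0, by simp [wordEval]⟩
  | of b =>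
    cases b
    · exact ⟨1, 0, by simp [wordEval]⟩
    · exact ⟨0, 1, by simp [wordEval]⟩
  | inv_of b ih =>
    obtain ⟨p, q, h⟩ := ih
    refine ⟨-p, -q, fun x y => ?_⟩
    rw [wordEval, map_inv, ← wordEval, h, zpow_neg, zpow_neg, mul_inv]
  | mul u v hu hv =>
    obtain ⟨p, q, hu⟩ := hu
    obtain ⟨p', q', hv⟩ := hv
    refine ⟨p + p', q + q', fun x y => ?_⟩
    rw [wordEval, map_mul, ← wordEval, ← wordEval, hu, hv, zpow_add, zpow_add,
      mul_mul_mul_comm]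

theorem wordEval_of_mul_of_zpow {G : Type*} [Group G] (n : ℤ) (x y : G) :
    wordEval (FreeGroup.of false * FreeGroup.of true ^ n) x y = x * y ^ n := by
  simp [wordEval]

def SolvesLinearRecursions (A : Type*) [AddCommGroup A] : Prop :=
  ∀ (a : ℕ → A) (n : ℕ → ℤ), ∃ h : ℕ → A, ∀ i, h i = a i + n i • h (i + 1)

theorem isHigmanComplete_multiplicative_iff {A : Type*} [AddCommGroup A] :
    IsHigmanComplete (Multiplicative A) ↔ SolvesLinearRecursions A := by
  constructor
  · intro hA a n
    obtain ⟨h, hh⟩ := hA (fun i => .ofAdd (a i))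
      fun i => FreeGroup.of false * FreeGroup.of true ^ n i
    refine ⟨fun i => (h i).toAdd, fun i => ?_⟩
    simpa [wordEval_of_mul_of_zpow] using congrArg Multiplicative.toAdd (hh i)
  · intro hA f w
    choose p q hpq using fun i => exists_wordEval_eq_zpow_mul_zpow (G := Multiplicative A) (w i)
    obtain ⟨h, hh⟩ := hA (fun i => p i • (f i).toAdd) q
    refine ⟨fun i => .ofAdd (h i), fun i => ?_⟩
    rw [hpq]
    exact congrArg Multiplicative.ofAdd (hh i)

theorem isAddTorsionFree_quotient_iff {M : Type*} [AddCommGroup M] (S : AddSubgroup M) :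
    IsAddTorsionFree (M ⧸ S) ↔ ∀ n : ℕ, n ≠ 0 → ∀ x : M, n • x ∈ S → x ∈ S := by
  simp only [isAddTorsionFree_iff_not_isOfFinAddOrder, isOfFinAddOrder_iff_nsmul_eq_zero]
  constructor
  · intro h n hn x hx
    by_contra hxS
    refine h ((QuotientAddGroup.eq_zero_iff x).not.2 hxS) ⟨n, Nat.pos_of_ne_zero hn, ?_⟩
    rwa [← QuotientAddGroup.mk_nsmul, QuotientAddGroup.eq_zero_iff]
  · intro h x
    induction x using QuotientAddGroup.induction_on with | H x => ?_
    rintro hx ⟨n, hn, hnx⟩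
    rw [← QuotientAddGroup.mk_nsmul, QuotientAddGroup.eq_zero_iff] at hnx
    exact hx ((QuotientAddGroup.eq_zero_iff x).2 (h n hn.ne' x hnx))

section Cotorsion

variable {A F G : Type u} [AddCommGroup A] [AddCommGroup F] [AddCommGroup G]

theorem IsCotorsion.exists_comp_eq (hA : IsCotorsion A) (φ : F →+ A) {ι : F →+ G}
    (hι : Injective ι) [IsAddTorsionFree (G ⧸ ι.range)] : ∃ ρ : G →+ A, ρ.comp ι = φ := by
  -- `(A × G) ⧸ N` is the pushout of `φ` and `ι`, and `π` identifies its quotient by `A` with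
  -- `G ⧸ ι.range`.
  let N := (φ.prod (-ι)).range
  let mk := QuotientAddGroup.mk' N
  let j : A →+ (A × G) ⧸ N := mk.comp (AddMonoidHom.inl A G)
  have hN : N ≤ ((QuotientAddGroup.mk' ι.range).comp (AddMonoidHom.snd A G)).ker := by
    rintro _ ⟨f, rfl⟩
    simp
  let π := QuotientAddGroup.lift N _ hN
  have hker : π.ker = j.range := by
    ext x
    obtain ⟨⟨a, g⟩, rfl⟩ := QuotientAddGroup.mk'_surjective N x
    constructor
    · intro hx
      obtain ⟨f, rfl⟩ := (QuotientAddGroup.eq_zero_iff g).1 hx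
      refine ⟨a + φ f, (QuotientAddGroup.mk'_eq_mk' N).2 ⟨-(φ f, -ι f), neg_mem ⟨f, rfl⟩, ?_⟩⟩
      simp
    · rintro ⟨b, hb⟩
      rw [AddMonoidHom.mem_ker, ← hb]
      simp [π, j, mk]
  have hj : Injective j := by
    rw [injective_iff_map_eq_zero]
    intro a ha
    obtain ⟨f, hf⟩ := (QuotientAddGroup.eq_zero_iff _).1 ha
    obtain ⟨rfl, hιf⟩ := Prod.ext_iff.1 hf
    simp [hι (neg_eq_zero.1 hιf |>.trans (map_zero ι).symm)]
  have : IsAddTorsionFree (((A × G) ⧸ N) ⧸ j.range) :=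
    hker ▸ (QuotientAddGroup.kerLift_injective π).isAddTorsionFree _
  obtain ⟨r, hr⟩ := hA _ j hj (isAddTorsionFree_iff_not_isOfFinAddOrder.1 this)
  refine ⟨(r.comp mk).comp (AddMonoidHom.inr A G), AddMonoidHom.ext fun f => ?_⟩
  have : mk (0, ι f) = j (φ f) :=
    (QuotientAddGroup.mk'_eq_mk' N).2 ⟨(φ f, -ι f), ⟨f, rfl⟩, by simp⟩
  simpa [this] using DFunLike.congr_fun hr (φ f)

end Cotorsion

section LinearRecursion

open Finsupp

variable (n : ℕ → ℤ)

noncomputable def recursionMap : (ℕ →₀ ℤ) →+ (ℕ →₀ ℤ) :=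
  liftAddHom fun i => zmultiplesHom _ (single i 1 - n i • single (i + 1) 1)

theorem recursionMap_single (i : ℕ) :
    recursionMap n (single i 1) = single i 1 - n i • single (i + 1) 1 := by
  simp [recursionMap]

theorem recursionMap_apply_zero (c : ℕ →₀ ℤ) : recursionMap n c 0 = c 0 := by
  induction c using Finsupp.induction_linear with
  | zero => simp
  | add f g hf hg => simp [hf, hg]
  | single i m => cases i <;> simp [recursionMap]

theorem recursionMap_apply_succ (c : ℕ →₀ ℤ) (j : ℕ) :
    recursionMap n c (j + 1) = c (j + 1) - n j * c j := by
  induction c using Finsupp.induction_linear with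
  | zero => simp
  | add f g hf hg => simp only [map_add, coe_add, Pi.add_apply, hf, hg]; ring
  | single i m =>
    simp only [recursionMap, liftAddHom_apply_single, zmultiplesHom_apply, smul_sub,
      coe_sub, coe_smul, Pi.sub_apply, Pi.smul_apply, single_apply, smul_eq_mul]
    by_cases h : i = j
    · subst h; simp [mul_comm]
    · by_cases h' : i = j + 1 <;> simp [h, h']

theorem recursionMap_injective : Injective (recursionMap n) := by
  rw [injective_iff_map_eq_zero]
  intro c hc
  ext j
  induction j with
  | zero => simpa [hc] using (recursionMap_apply_zero n c).symm
  | succ j ih => simpa [ih, hc] using (recursionMap_apply_succ n c j).symm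

theorem dvd_of_recursionMap_eq_zsmul {c g : ℕ →₀ ℤ} {k : ℤ} (h : recursionMap n c = k • g)
    (j : ℕ) : k ∣ c j := by
  induction j with
  | zero => exact ⟨g 0, by simpa [h] using (recursionMap_apply_zero n c).symm⟩
  | succ j ih =>
    have := recursionMap_apply_succ n c j
    rw [h, coe_smul, Pi.smul_apply, smul_eq_mul] at this
    rw [show c (j + 1) = k * g (j + 1) + n j * c j by linarith]
    exact dvd_add (dvd_mul_right _ _) (dvd_mul_of_dvd_right ih _)

instance : IsAddTorsionFree ((ℕ →₀ ℤ) ⧸ (recursionMap n).range) := by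
  refine (isAddTorsionFree_quotient_iff _).2 fun m hm g ⟨c, hc⟩ => ?_
  rw [← natCast_zsmul] at hc
  have hdvd := dvd_of_recursionMap_eq_zsmul n hc
  let c' := c.mapRange (· / (m : ℤ)) (Int.zero_ediv _)
  have hc' : (m : ℤ) • c' = c := by
    ext j
    simp [c', Int.mul_ediv_cancel' (hdvd j)]
  refine ⟨c', zsmul_right_injective (Nat.cast_ne_zero.2 hm) ?_⟩
  simp only [← map_zsmul, hc', hc]

end LinearRecursion

theorem IsCotorsion.solvesLinearRecursions {A : Type} [AddCommGroup A] (hA : IsCotorsion A) :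
    SolvesLinearRecursions A := by
  intro a n
  obtain ⟨ρ, hρ⟩ := hA.exists_comp_eq (Finsupp.liftAddHom fun i => zmultiplesHom A (a i))
    (recursionMap_injective n)
  refine ⟨fun i => ρ (Finsupp.single i 1), fun i => ?_⟩
  have := DFunLike.congr_fun hρ (Finsupp.single i 1)
  simp only [AddMonoidHom.comp_apply, recursionMap_single, map_sub, map_zsmul,
    Finsupp.liftAddHom_apply_single, zmultiplesHom_apply, one_smul] at this
  rw [← this, sub_add_cancel]

section TorsionFree

open AddSubgroup

variable {Q : Type*} [AddCommGroup Q] [IsAddTorsionFree Q]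

theorem exists_mem_zmultiples_of_zsmul_mem {x y : Q} {m : ℤ} (hm : m ≠ 0)
    (h : m • x ∈ zmultiples y) : ∃ z, y ∈ zmultiples z ∧ x ∈ zmultiples z := by
  obtain ⟨j, hj⟩ := mem_zmultiples_iff.1 h
  obtain ⟨d, m', j', hd, hcop, rfl, rfl⟩ := Int.exists_gcd_one' (Int.gcd_pos_of_ne_zero_left j hm)
  have hm' : m' ≠ 0 := left_ne_zero_of_mul hm
  have hxy : m' • x = j' • y := by
    refine zsmul_right_injective (Int.natCast_ne_zero.2 hd.ne') ?_
    simp only [smul_smul, mul_comm (d : ℤ)] at hj ⊢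
    exact hj.symm
  obtain ⟨u, v, huv⟩ := Int.isCoprime_iff_gcd_eq_one.2 hcop
  have hy : m' • (u • y + v • x) = y := by
    rw [smul_add, smul_comm m' v, hxy, smul_smul, smul_smul, ← add_smul, mul_comm m', huv,
      one_smul]
  refine ⟨u • y + v • x, ⟨m', hy⟩, ⟨j', zsmul_right_injective hm' ?_⟩⟩
  simp only
  rw [smul_comm, hy, hxy]

theorem countable_setOf_zsmul_mem_zmultiples (y₀ : Q) :
    {x : Q | ∃ m : ℤ, m ≠ 0 ∧ m • x ∈ zmultiples y₀}.Countable := by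
  refine (Set.countable_iUnion fun p : ℤ × ℤ =>
    (?_ : {x : Q | p.1 ≠ 0 ∧ p.1 • x = p.2 • y₀}.Subsingleton).countable).mono ?_
  · rintro x ⟨hm, hx⟩ x' ⟨-, hx'⟩
    exact zsmul_right_injective hm (hx.trans hx'.symm)
  · rintro x ⟨m, hm, j, hj⟩
    exact Set.mem_iUnion.2 ⟨(m, j), hm, hj.symm⟩

theorem exists_zmultiples_chain {y₀ : Q} (hy₀ : y₀ ≠ 0) :
    ∃ y : ℕ → Q, y 0 = y₀ ∧ (∀ k, y k ≠ 0) ∧ (∀ k, y k ∈ zmultiples (y (k + 1))) ∧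
      ∀ (x : Q) (m : ℤ), m ≠ 0 → ∀ k, m • x ∈ zmultiples (y k) →
        ∃ k', x ∈ zmultiples (y k') := by
  obtain ⟨xs, hxs⟩ := (countable_setOf_zsmul_mem_zmultiples y₀).exists_eq_range
    ⟨y₀, 1, one_ne_zero, by simp⟩
  have step : ∀ y x : Q, ∃ z, y ∈ zmultiples z ∧
      ∀ m : ℤ, m ≠ 0 → m • x ∈ zmultiples y → x ∈ zmultiples z := by
    intro y x
    by_cases h : ∃ m : ℤ, m ≠ 0 ∧ m • x ∈ zmultiples y
    · obtain ⟨m, hm, hmx⟩ := h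
      obtain ⟨z, hyz, hxz⟩ := exists_mem_zmultiples_of_zsmul_mem hm hmx
      exact ⟨z, hyz, fun _ _ _ => hxz⟩
    · exact ⟨y, mem_zmultiples y, fun m hm hmx => (h ⟨m, hm, hmx⟩).elim⟩
  choose Z hZy hZx using step
  -- `y (k + 1)` generates a cyclic group containing `y k` and `xs k`, the `k`-th element of the
  -- pure closure of `y₀`.
  let y : ℕ → Q := fun k => Nat.rec y₀ (fun k yk => Z yk (xs k)) k
  have hmono : ∀ k, y k ∈ zmultiples (y (k + 1)) := fun k => hZy _ _
  have hy₀_mem : ∀ k, y₀ ∈ zmultiples (y k) := by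
    intro k
    induction k with
    | zero => exact mem_zmultiples y₀
    | succ k ih => exact zmultiples_le.2 (hmono k) ih
  refine ⟨y, rfl, fun k hk => hy₀ ?_, hmono, fun x m hm k hx => ?_⟩
  · simpa [hk] using hy₀_mem k
  obtain ⟨N, hN⟩ := mem_zmultiples_iff.1 (hy₀_mem k)
  obtain ⟨j, hj⟩ := mem_zmultiples_iff.1 hx
  have hN0 : N ≠ 0 := by
    rintro rfl
    exact hy₀ (by simpa using hN.symm)
  have hx_range : x ∈ Set.range xs := hxs ▸ ⟨N * m, mul_ne_zero hN0 hm, j, by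
    rw [mul_smul, ← hj, ← hN, smul_comm]⟩
  obtain ⟨k', rfl⟩ := hx_range
  obtain ⟨m', hm', hm'x⟩ : xs k' ∈ {x : Q | ∃ m : ℤ, m ≠ 0 ∧ m • x ∈ zmultiples y₀} :=
    hxs ▸ Set.mem_range_self k'
  exact ⟨k' + 1, hZx _ _ m' hm' (zmultiples_le.2 (hy₀_mem k') hm'x)⟩

end TorsionFree

theorem AddSubgroup.mem_iSup_sup_zmultiples {M : Type*} [AddCommGroup M] {S : AddSubgroup M}
    {v : ℕ → M} (hv : ∀ k, v k ∈ S ⊔ zmultiples (v (k + 1))) {x : M} :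
    x ∈ ⨆ k, S ⊔ zmultiples (v k) ↔ ∃ k, ∃ j : ℤ, x - j • v k ∈ S := by
  have hmono : Monotone fun k => S ⊔ zmultiples (v k) :=
    monotone_nat_of_le_succ fun k => sup_le le_sup_left (zmultiples_le.2 (hv k))
  rw [mem_iSup_of_directed hmono.directed_le]
  refine exists_congr fun k => ⟨fun hx => ?_, fun ⟨j, hj⟩ => ?_⟩
  · obtain ⟨s, hs, _, ⟨j, rfl⟩, rfl⟩ := mem_sup.1 hx
    exact ⟨j, by simpa using hs⟩
  · exact mem_sup.2 ⟨_, hj, _, ⟨j, rfl⟩, sub_add_cancel x _⟩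

section PartialRetraction

open AddSubgroup

variable {A B : Type*} [AddCommGroup A] [AddCommGroup B] {i : A →+ B} {Γ : AddSubgroup (B × A)}

theorem AddSubgroup.mem_map_fst_iff {b : B} :
    b ∈ Γ.map (AddMonoidHom.fst B A) ↔ ∃ a, (b, a) ∈ Γ :=
  ⟨fun ⟨⟨_, a⟩, h, hb⟩ => ⟨a, hb ▸ h⟩, fun ⟨_, h⟩ => ⟨_, h, rfl⟩⟩

variable (i Γ) in
/-- `Γ` is the graph of a homomorphism `ρ` from a pure subgroup of `B` to `A` with `ρ ∘ i = id`. -/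
structure IsPartialRetraction : Prop where
  mem_of_apply : ∀ a : A, (i a, a) ∈ Γ
  eq_zero_of_mem {a : A} : ((0 : B), a) ∈ Γ → a = 0
  isAddTorsionFree : IsAddTorsionFree (B ⧸ Γ.map (AddMonoidHom.fst B A))

theorem isPartialRetraction_range_prod_id (hi : Injective i)
    (htf : IsAddTorsionFree (B ⧸ i.range)) :
    IsPartialRetraction i (i.prod (AddMonoidHom.id A)).range where
  mem_of_apply a := ⟨a, rfl⟩
  eq_zero_of_mem := by
    rintro a ⟨a', ha'⟩
    obtain ⟨hia', rfl⟩ := Prod.ext_iff.1 ha'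
    exact hi (hia'.trans (map_zero i).symm)
  isAddTorsionFree := by rwa [AddMonoidHom.map_range, AddMonoidHom.fst_comp_prod]

theorem isPartialRetraction_sSup_of_directedOn {c : Set (AddSubgroup (B × A))} (hne : c.Nonempty)
    (hdir : DirectedOn (· ≤ ·) c) (hc : ∀ Γ ∈ c, IsPartialRetraction i Γ) :
    IsPartialRetraction i (sSup c) := by
  have mem_sSup {p : B × A} : p ∈ sSup c ↔ ∃ Γ ∈ c, p ∈ Γ := mem_sSup_of_directedOn hne hdir
  refine ⟨fun a => ?_, fun ha => ?_, (isAddTorsionFree_quotient_iff _).2 fun n hn b hb => ?_⟩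
  · obtain ⟨Γ, hΓ⟩ := hne
    exact mem_sSup.2 ⟨Γ, hΓ, (hc Γ hΓ).mem_of_apply a⟩
  · obtain ⟨Γ, hΓ, ha⟩ := mem_sSup.1 ha
    exact (hc Γ hΓ).eq_zero_of_mem ha
  · obtain ⟨a, ha⟩ := mem_map_fst_iff.1 hb
    obtain ⟨Γ, hΓ, ha⟩ := mem_sSup.1 ha
    have := (isAddTorsionFree_quotient_iff _).1 (hc Γ hΓ).isAddTorsionFree n hn b
      (mem_map_fst_iff.2 ⟨a, ha⟩)
    exact map_mono (le_sSup hΓ) this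

theorem IsPartialRetraction.exists_retraction (hΓ : IsPartialRetraction i Γ)
    (htop : Γ.map (AddMonoidHom.fst B A) = ⊤) : ∃ r : B →+ A, r.comp i = AddMonoidHom.id A := by
  choose r hr using fun b => mem_map_fst_iff.1 (htop ▸ mem_top b)
  have eq_of_mem {b : B} {a : A} (h : (b, a) ∈ Γ) : r b = a :=
    sub_eq_zero.1 (hΓ.eq_zero_of_mem (by simpa using sub_mem (hr b) h))
  exact ⟨.mk' r fun x y => eq_of_mem (add_mem (hr x) (hr y)),
    AddMonoidHom.ext fun a => eq_of_mem (hΓ.mem_of_apply a)⟩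

theorem IsPartialRetraction.iSup_sup_zmultiples (hΓ : IsPartialRetraction i Γ) {t : ℕ → B}
    {h : ℕ → A} (hv : ∀ k, (t k, h k) ∈ Γ ⊔ zmultiples (t (k + 1), h (k + 1)))
    (hne : ∀ k, (t k : B ⧸ Γ.map (AddMonoidHom.fst B A)) ≠ 0)
    (hsat : ∀ (x : B ⧸ Γ.map (AddMonoidHom.fst B A)) (m : ℤ), m ≠ 0 →
      ∀ k, m • x ∈ zmultiples (t k : B ⧸ Γ.map (AddMonoidHom.fst B A)) →
        ∃ k', x ∈ zmultiples (t k' : B ⧸ Γ.map (AddMonoidHom.fst B A))) :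
    IsPartialRetraction i (⨆ k, Γ ⊔ zmultiples (t k, h k)) := by
  have := hΓ.isAddTorsionFree
  have hle : Γ ≤ ⨆ k, Γ ⊔ zmultiples (t k, h k) := le_iSup_of_le 0 le_sup_left
  have ht_mem (k : ℕ) : t k ∈ (⨆ k, Γ ⊔ zmultiples (t k, h k)).map (AddMonoidHom.fst B A) :=
    mem_map_fst_iff.2 ⟨h k, mem_iSup_of_mem k (mem_sup_right (mem_zmultiples _))⟩
  refine ⟨fun a => hle (hΓ.mem_of_apply a), fun ha => ?_,
    (isAddTorsionFree_quotient_iff _).2 fun n hn b hb => ?_⟩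
  · obtain ⟨k, j, hkj⟩ := (mem_iSup_sup_zmultiples (v := fun k => (t k, h k)) hv).1 ha
    have hj : j = 0 := by
      refine (IsAddTorsionFree.zsmul_eq_zero_iff_left (hne k)).1 ?_
      rw [← QuotientAddGroup.mk_zsmul, QuotientAddGroup.eq_zero_iff]
      simpa using neg_mem (mem_map_fst_iff.2 ⟨_, hkj⟩)
    exact hΓ.eq_zero_of_mem (by simpa [hj] using hkj)
  · obtain ⟨a, ha⟩ := mem_map_fst_iff.1 hb
    obtain ⟨k, j, hkj⟩ := (mem_iSup_sup_zmultiples (v := fun k => (t k, h k)) hv).1 ha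
    have hnb : (n : ℤ) • (b : B ⧸ Γ.map (AddMonoidHom.fst B A)) ∈
        zmultiples (t k : B ⧸ Γ.map (AddMonoidHom.fst B A)) := by
      refine ⟨j, ?_⟩
      change j • _ = _
      rw [natCast_zsmul, ← QuotientAddGroup.mk_zsmul, ← QuotientAddGroup.mk_nsmul, eq_comm,
        QuotientAddGroup.eq_iff_sub_mem]
      simpa using mem_map_fst_iff.2 ⟨_, hkj⟩
    obtain ⟨k', e, he⟩ := hsat _ _ (Nat.cast_ne_zero.2 hn) k hnb
    have hbe : b - e • t k' ∈ Γ.map (AddMonoidHom.fst B A) := by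
      rw [← QuotientAddGroup.eq_iff_sub_mem]
      simp [he]
    simpa using add_mem (map_mono hle hbe) (zsmul_mem (ht_mem k') e)

theorem IsPartialRetraction.exists_extension (hA : SolvesLinearRecursions A)
    (hΓ : IsPartialRetraction i Γ) {b₀ : B} (hb₀ : b₀ ∉ Γ.map (AddMonoidHom.fst B A)) :
    ∃ Γ', IsPartialRetraction i Γ' ∧ Γ ≤ Γ' ∧ b₀ ∈ Γ'.map (AddMonoidHom.fst B A) := by
  have := hΓ.isAddTorsionFree
  obtain ⟨y, hy0, hyne, hymono, hysat⟩ :=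
    exists_zmultiples_chain (y₀ := (b₀ : B ⧸ Γ.map (AddMonoidHom.fst B A)))
      (by rwa [Ne, QuotientAddGroup.eq_zero_iff])
  choose t ht using fun k => QuotientAddGroup.mk_surjective (y k)
  choose c hc using fun k => mem_zmultiples_iff.1 (hymono k)
  have hD (k : ℕ) : t k - c k • t (k + 1) ∈ Γ.map (AddMonoidHom.fst B A) := by
    rw [← QuotientAddGroup.eq_iff_sub_mem]
    simp [ht, hc]
  choose α hα using fun k => mem_map_fst_iff.1 (hD k)
  obtain ⟨h, hh⟩ := hA α c
  have hv (k : ℕ) : (t k, h k) ∈ Γ ⊔ zmultiples (t (k + 1), h (k + 1)) :=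
    mem_sup.2 ⟨_, hα k, _, zsmul_mem (mem_zmultiples _) (c k),
      Prod.ext (sub_add_cancel _ _) (hh k).symm⟩
  have hle : Γ ≤ ⨆ k, Γ ⊔ zmultiples (t k, h k) := le_iSup_of_le 0 le_sup_left
  refine ⟨⨆ k, Γ ⊔ zmultiples (t k, h k), hΓ.iSup_sup_zmultiples hv ?_ ?_, hle, ?_⟩
  · simpa only [ht] using hyne
  · simpa only [ht] using hysat
  · have ht₀ : t 0 - b₀ ∈ Γ.map (AddMonoidHom.fst B A) :=
      QuotientAddGroup.eq_iff_sub_mem.1 ((ht 0).trans hy0)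
    have ht₀_mem : t 0 ∈ (⨆ k, Γ ⊔ zmultiples (t k, h k)).map (AddMonoidHom.fst B A) :=
      mem_map_fst_iff.2 ⟨h 0, mem_iSup_of_mem 0 (mem_sup_right (mem_zmultiples _))⟩
    simpa using sub_mem ht₀_mem (map_mono hle ht₀)

end PartialRetraction

theorem SolvesLinearRecursions.isCotorsion {A : Type u} [AddCommGroup A]
    (hA : SolvesLinearRecursions A) : IsCotorsion A := by
  intro B _ i hi htf
  obtain ⟨Γ, -, hΓ, hmax⟩ := zorn_le_nonempty₀ {Γ | IsPartialRetraction i Γ}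
    (fun c hc hchain Γ hΓ => ⟨sSup c,
      isPartialRetraction_sSup_of_directedOn ⟨Γ, hΓ⟩ hchain.directedOn hc, fun _ => le_sSup⟩) _
    (isPartialRetraction_range_prod_id hi (isAddTorsionFree_iff_not_isOfFinAddOrder.2 htf))
  refine hΓ.exists_retraction (eq_top_iff.2 fun b _ => ?_)
  by_contra hb
  obtain ⟨Γ', hΓ', hle, hb'⟩ := hΓ.exists_extension hA hb
  exact hb (AddSubgroup.map_mono (hmax hΓ' hle) hb')

/-- An abelian group is Higman-complete if and only if it is cotorsion. -/
theorem higmanComplete_iff_cotorsion (A : Type) [AddCommGroup A] :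
    IsHigmanComplete (Multiplicative A) ↔ IsCotorsion A := by
  rw [isHigmanComplete_multiplicative_iff]
  exact ⟨SolvesLinearRecursions.isCotorsion, IsCotorsion.solvesLinearRecursions⟩
end

section
/- The abelianization of a locally free group is torsion-free. -/
/-!
Being a commutator product is a finitary condition: if `g ^ n ∈ [G, G]`, finitely many commutators
witness it, so `g ^ n ∈ [H, H]` for a finitely generated subgroup `H ∋ g`. Such an `H` is free, and
the abelianization of a free group on `ι` is `ι →₀ ℤ`, which is torsion-free; hence
`g ∈ [H, H] ≤ [G, G]`.
-/

/-- Old Mathlib's `Monoid.IsTorsionFree` (removed since): no nontrivial element has finite order. -/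
def Monoid.IsTorsionFree (G : Type*) [Monoid G] : Prop :=
  ∀ g : G, g ≠ 1 → ¬IsOfFinOrder g

-- `FreeAbelianGroup ι` is defined as `Additive (Abelianization (FreeGroup ι))`.
instance Abelianization.instIsMulTorsionFreeFreeGroup (ι : Type*) :
    IsMulTorsionFree (Abelianization (FreeGroup ι)) :=
  (AddEquiv.toMultiplicative (FreeAbelianGroup.equivFinsupp ι) :
    Abelianization (FreeGroup ι) ≃* Multiplicative (ι →₀ ℤ)).injective.isMulTorsionFree _

lemma MulEquiv.isMulTorsionFree_abelianization {G H : Type*} [Group G] [Group H] (e : G ≃* H)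
    [IsMulTorsionFree (Abelianization H)] : IsMulTorsionFree (Abelianization G) :=
  e.abelianizationCongr.injective.isMulTorsionFree e.abelianizationCongr.toMonoidHom

section

variable {G : Type*} [Group G]

lemma exists_fg_mem_commutator_of_mem_commutator {x : G} (hx : x ∈ commutator G) :
    ∃ H : Subgroup G, H.FG ∧ x ∈ ⁅H, H⁆ := by
  rw [commutator_eq_closure] at hx
  induction hx using Subgroup.closure_induction with
  | mem x hx =>
    obtain ⟨a, b, rfl⟩ := hx
    exact ⟨.closure {a, b}, (Subgroup.fg_iff _).mpr ⟨{a, b}, rfl, Set.toFinite _⟩,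
      Subgroup.commutator_mem_commutator (Subgroup.subset_closure (by simp))
        (Subgroup.subset_closure (by simp))⟩
  | one => exact ⟨⊥, Subgroup.FG.bot, one_mem _⟩
  | mul x y _ _ hx hy =>
    obtain ⟨H, hH, hxH⟩ := hx
    obtain ⟨K, hK, hyK⟩ := hy
    exact ⟨H ⊔ K, hH.sup hK,
      mul_mem (Subgroup.commutator_mono le_sup_left le_sup_left hxH)
        (Subgroup.commutator_mono le_sup_right le_sup_right hyK)⟩
  | inv x _ hx =>
    obtain ⟨H, hH, hxH⟩ := hx
    exact ⟨H, hH, inv_mem hxH⟩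

lemma mem_commutator_of_pow_mem_commutator [IsMulTorsionFree (Abelianization G)] {g : G} {n : ℕ}
    (hn : n ≠ 0) (hg : g ^ n ∈ commutator G) : g ∈ commutator G := by
  rw [← Abelianization.ker_of, MonoidHom.mem_ker, map_pow] at hg
  rw [← Abelianization.ker_of, MonoidHom.mem_ker]
  exact (pow_left_injective hn).eq_iff.mp (hg.trans (one_pow n).symm)

lemma Subgroup.mem_commutator_of_pow_mem_commutator {H : Subgroup G}
    [IsMulTorsionFree (Abelianization H)] {g : G} (hgH : g ∈ H) {n : ℕ} (hn : n ≠ 0)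
    (hg : g ^ n ∈ ⁅H, H⁆) : g ∈ ⁅H, H⁆ := by
  rw [← H.map_subtype_commutator] at hg ⊢
  obtain ⟨h, hh, hhg⟩ := hg
  obtain rfl : h = ⟨g, hgH⟩ ^ n := Subtype.ext hhg
  exact ⟨⟨g, hgH⟩, _root_.mem_commutator_of_pow_mem_commutator hn hh, rfl⟩

lemma isMulTorsionFree_abelianization_of_forall_fg
    (h : ∀ H : Subgroup G, H.FG → IsMulTorsionFree (Abelianization H)) :
    IsMulTorsionFree (Abelianization G) := by
  refine isMulTorsionFree_iff_not_isOfFinOrder.mpr fun x hx hfin => hx ?_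
  obtain ⟨n, hn, hxn⟩ := isOfFinOrder_iff_pow_eq_one.mp hfin
  obtain ⟨g, rfl⟩ := QuotientGroup.mk'_surjective (commutator G) x
  have hgn : g ^ n ∈ commutator G := (QuotientGroup.eq_one_iff _).mp hxn
  obtain ⟨H, hH, hgnH⟩ := exists_fg_mem_commutator_of_mem_commutator hgn
  set K := H ⊔ Subgroup.zpowers g
  have hK : K.FG :=
    hH.sup ((Subgroup.fg_iff _).mpr ⟨{g}, (Subgroup.zpowers_eq_closure g).symm, Set.toFinite _⟩)
  have := h K hK
  have hgK : g ∈ ⁅K, K⁆ := K.mem_commutator_of_pow_mem_commutator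
    (Subgroup.mem_sup_right (Subgroup.mem_zpowers g)) hn.ne'
    (Subgroup.commutator_mono le_sup_left le_sup_left hgnH)
  exact (QuotientGroup.eq_one_iff g).mpr (Subgroup.commutator_mono le_top le_top hgK)

end

/-- The abelianization of a locally free group (every finitely generated subgroup
is a free group) is torsion-free. -/
theorem abelianization_locallyFree_torsionFree (G : Type) [Group G]
    (hlf : ∀ H : Subgroup G, H.FG → ∃ ι : Type, Nonempty (H ≃* FreeGroup ι)) :
    Monoid.IsTorsionFree (Abelianization G) := by
  have : IsMulTorsionFree (Abelianization G) :=
    isMulTorsionFree_abelianization_of_forall_fg fun H hH => by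
      obtain ⟨ι, ⟨e⟩⟩ := hlf H hH
      exact e.isMulTorsionFree_abelianization
  exact isMulTorsionFree_iff_not_isOfFinOrder.mp this
end

section
/- The groups ⊕_{ℵ₀} ∏_{ℵ₀} ℤ and ∏_{ℵ₀} ⊕_{ℵ₀} ℤ (countable direct sum of countable direct products of ℤ, versus countable direct product of countable direct sums of ℤ) are not isomorphic as abelian groups. -/
open DirectSum

/-!
Every homomorphism `ℤ^ℕ → ⊕ℤ` has image in `⊕_{j<m} ℤ` for some `m`. This rests on two facts
about a homomorphism `f : ℤ^ℕ → A`. If `f` kills the unit vectors and `⋂ₙ 2ⁿA = ⋂ₙ 3ⁿA = 0`,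
then `f = 0`: by Bézout every `x` is `y + z` with `2ⁱ ∣ yᵢ` and `3ⁱ ∣ zᵢ`, and `f y` lies in
`f(finitely supported) + 2ⁿA = 2ⁿA` for every `n`. If `A` is moreover countable and torsion free,
`f` kills almost all unit vectors: otherwise, along a subsequence and for suitable rapidly
2-divisible weights `c`, the map `S ↦ f(1_S · c)` would inject `Set ℕ` into `A`.

Consequently a homomorphism `⊕ₙ ℤ^ℕ → ∏ₖ ⊕ⱼ ℤ` maps the `n`-th summand, in coordinate `k`, into
`⊕_{j < m(n,k)} ℤ`. If `J k ≥ m(n,k)` for all `n ≤ k`, the element `(e_{J k})ₖ` is not a finite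
sum of such images, so the map is not surjective.
-/

/-- `⋂ₙ mⁿA = 0`: an elementary form of `IsHausdorff (Ideal.span {m}) A`. -/
def AdicSeparated (m : ℤ) (A : Type*) [AddCommGroup A] : Prop :=
  ∀ a : A, (∀ n : ℕ, ∃ b : A, a = m ^ n • b) → a = 0

lemma adicSeparated_int {m : ℤ} (hm : 2 ≤ m) : AdicSeparated m ℤ := by
  intro a ha
  obtain ⟨b, hb⟩ := ha a.natAbs
  refine Int.eq_zero_of_abs_lt_dvd ⟨b, by simpa using hb⟩ ?_
  calc |a| = (a.natAbs : ℤ) := Int.abs_eq_natAbs a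
    _ < 2 ^ a.natAbs := by exact_mod_cast Nat.lt_two_pow_self
    _ ≤ m ^ a.natAbs := pow_le_pow_left₀ (by norm_num) hm _

lemma AdicSeparated.directSum {m : ℤ} {ι : Type*} {A : ι → Type*} [∀ i, AddCommGroup (A i)]
    (h : ∀ i, AdicSeparated m (A i)) : AdicSeparated m (⨁ i, A i) := by
  intro a ha
  choose b hb using ha
  ext i
  exact h i (a i) fun n => ⟨b n i, by rw [hb n]; rfl⟩

instance {ι : Type*} {A : ι → Type*} [∀ i, AddCommGroup (A i)] [∀ i, IsAddTorsionFree (A i)] :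
    IsAddTorsionFree (⨁ i, A i) :=
  DFunLike.coe_injective.isAddTorsionFree DFinsupp.coeFnAddMonoidHom

instance {ι : Type*} {A : ι → Type*} [∀ i, AddCommGroup (A i)] [Countable ι]
    [∀ i, Countable (A i)] : Countable (⨁ i, A i) :=
  inferInstanceAs (Countable (Π₀ i, A i))

lemma Function.ExtendByZero.hom_single {ι η R : Type*} [AddZeroClass R] [DecidableEq ι]
    [DecidableEq η] {s : ι → η} (hs : Injective s) (i : ι) (r : R) :
    ExtendByZero.hom R s (Pi.single i r) = Pi.single (s i) r := by
  ext p
  rw [ExtendByZero.hom_apply]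
  by_cases hp : ∃ j, s j = p
  · obtain ⟨j, rfl⟩ := hp
    simp [hs.extend_apply, Pi.single_apply, hs.eq_iff]
  · rw [extend_apply' _ _ _ hp, Pi.single_apply, if_neg (fun h => hp ⟨i, h.symm⟩), Pi.zero_apply]

namespace AddMonoidHom

variable {A : Type*} [AddCommGroup A] (f : (ℕ → ℤ) →+ A)

lemma map_eq_zero_of_forall_ge (hf : ∀ i, f (Pi.single i 1) = 0) {x : ℕ → ℤ} {n : ℕ}
    (hx : ∀ i, n ≤ i → x i = 0) : f x = 0 := by
  have hsum : ∑ i ∈ Finset.range n, x i • Pi.single i (1 : ℤ) = x := by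
    ext p
    rw [Finset.sum_apply]
    simp only [Pi.smul_apply, Pi.single_apply, smul_eq_mul, mul_ite, mul_one, mul_zero,
      Finset.sum_ite_eq, Finset.mem_range]
    split_ifs with hp
    · rfl
    · exact (hx p (not_lt.1 hp)).symm
  rw [← hsum, map_sum]
  simp only [map_zsmul, hf, smul_zero, Finset.sum_const_zero]

lemma exists_map_eq_smul_of_forall_dvd {d : ℤ} {x : ℕ → ℤ} (hx : ∀ i, d ∣ x i) :
    ∃ b, f x = d • b := by
  choose y hy using hx
  refine ⟨f y, ?_⟩
  rw [← map_zsmul]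
  congr 1
  ext i
  simp [hy]

lemma map_eq_zero_of_pow_dvd {m : ℤ} (hA : AdicSeparated m A) (hf : ∀ i, f (Pi.single i 1) = 0)
    {x : ℕ → ℤ} (hx : ∀ i, m ^ i ∣ x i) : f x = 0 := by
  refine hA _ fun n => ?_
  have hsplit : x = (fun i => if i < n then x i else 0) + (fun i => if i < n then 0 else x i) := by
    ext i
    rw [Pi.add_apply]
    split_ifs <;> simp
  have htail : ∀ i, m ^ n ∣ (fun i => if i < n then 0 else x i) i := by
    intro i
    dsimp only
    split_ifs with hi
    · exact dvd_zero _
    · exact (pow_dvd_pow m (not_lt.1 hi)).trans (hx i)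
  obtain ⟨b, hb⟩ := f.exists_map_eq_smul_of_forall_dvd htail
  refine ⟨b, ?_⟩
  rw [hsplit, map_add, f.map_eq_zero_of_forall_ge hf (n := n) fun i hi => if_neg (not_lt.2 hi),
    zero_add, hb]

theorem eq_zero_of_map_single_eq_zero (h2 : AdicSeparated 2 A) (h3 : AdicSeparated 3 A)
    (hf : ∀ i, f (Pi.single i 1) = 0) : f = 0 := by
  have hcop (i : ℕ) : IsCoprime ((2 : ℤ) ^ i) (3 ^ i) := IsCoprime.pow (by norm_num)
  choose u v huv using hcop
  ext x
  have hsplit : x = (fun i => x i * u i * 2 ^ i) + (fun i => x i * v i * 3 ^ i) := by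
    ext i
    rw [Pi.add_apply]
    linear_combination (x i) * (huv i).symm
  rw [hsplit, map_add, f.map_eq_zero_of_pow_dvd h2 hf fun i => Dvd.intro_left _ rfl,
    f.map_eq_zero_of_pow_dvd h3 hf fun i => Dvd.intro_left _ rfl, add_zero, zero_apply]

lemma map_indicator_ne [IsAddTorsionFree A] {c : ℕ → ℤ} {k : ℕ} (hck : c k ≠ 0) {d : ℤ}
    (hd : ¬ ∃ b, f (Pi.single k 1) = d • b) (hcd : ∀ i, k < i → c k * d ∣ c i)
    {S T : Set ℕ} (hS : k ∈ S) (hT : k ∉ T) (hST : ∀ i < k, i ∈ S ↔ i ∈ T) :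
    f (S.indicator c) ≠ f (T.indicator c) := by
  classical
  intro h
  set δ := S.indicator c - T.indicator c
  have hrest : ∀ i, c k * d ∣ (δ - c k • Pi.single k 1 : ℕ → ℤ) i := by
    intro i
    rcases lt_trichotomy i k with hi | rfl | hi
    · simp [δ, Set.indicator_apply, hST i hi, hi.ne]
    · simp [δ, hS, hT]
    · have hi' : c k * d ∣ c i := hcd i hi
      simp only [δ, Pi.sub_apply, Set.indicator_apply, Pi.smul_apply, Pi.single_apply, hi.ne',
        if_false, smul_zero, sub_zero]
      split_ifs <;> simp [hi']
  obtain ⟨b, hb⟩ := f.exists_map_eq_smul_of_forall_dvd hrest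
  have hδ : c k • (f (Pi.single k 1) + d • b) = 0 := by
    rw [smul_add, smul_smul, ← hb, ← map_zsmul, ← map_add, add_sub_cancel, map_sub, h, sub_self]
  refine hd ⟨-b, ?_⟩
  rw [smul_neg, eq_neg_iff_add_eq_zero]
  exact (smul_eq_zero.1 hδ).resolve_left hck

lemma exists_map_single_eq_zero [Countable A] [IsAddTorsionFree A] (hA : AdicSeparated 2 A) :
    ∃ i, f (Pi.single i 1) = 0 := by
  classical
  by_contra! hne
  have hdiv (i : ℕ) : ∃ n : ℕ, ¬ ∃ b, f (Pi.single i 1) = (2 : ℤ) ^ n • b := by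
    by_contra! h
    exact hne i (hA _ h)
  choose n hn using hdiv
  set c : ℕ → ℤ := fun k => 2 ^ ∑ l ∈ Finset.range k, n l
  have hcd (k i : ℕ) (hi : k < i) : c k * 2 ^ n k ∣ c i := by
    rw [← pow_add, ← Finset.sum_range_succ]
    exact pow_dvd_pow 2 (Finset.sum_le_sum_of_subset (Finset.range_subset_range.2 hi))
  have hsep : ∀ S T : Set ℕ, ∀ k ∈ S, k ∉ T → (∀ i < k, i ∈ S ↔ i ∈ T) →
      f (S.indicator c) ≠ f (T.indicator c) := fun S T k hS hT hST =>
    f.map_indicator_ne (c := c) (pow_ne_zero _ two_ne_zero) (hn k) (hcd k) hS hT hST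
  obtain ⟨e, he⟩ := Countable.exists_injective_nat A
  refine Function.cantor_injective (fun S => e (f (S.indicator c))) fun S T hST => ?_
  by_contra hST'
  have hex : ∃ k, ¬ (k ∈ S ↔ k ∈ T) := by
    by_contra! h
    exact hST' (Set.ext h)
  have hmin (i : ℕ) (hi : i < Nat.find hex) : i ∈ S ↔ i ∈ T := not_not.1 (Nat.find_min hex hi)
  by_cases hk : Nat.find hex ∈ S
  · exact hsep S T _ hk (fun h => Nat.find_spec hex (iff_of_true hk h)) hmin (he hST)
  · exact hsep T S _ (by simpa [hk] using Nat.find_spec hex) hk (fun i hi => (hmin i hi).symm)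
      (he hST).symm

lemma finite_setOf_map_single_ne_zero [Countable A] [IsAddTorsionFree A]
    (hA : AdicSeparated 2 A) : {i | f (Pi.single i 1) ≠ 0}.Finite := by
  by_contra hinf
  obtain ⟨k, hk⟩ := (f.comp (Function.ExtendByZero.hom ℤ
    (Nat.nth fun i => f (Pi.single i 1) ≠ 0))).exists_map_single_eq_zero hA
  rw [comp_apply, Function.ExtendByZero.hom_single (Nat.nth_injective hinf)] at hk
  exact Nat.nth_mem_of_infinite hinf k hk

theorem exists_eq_sum_range [Countable A] [IsAddTorsionFree A] (h2 : AdicSeparated 2 A)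
    (h3 : AdicSeparated 3 A) :
    ∃ M, ∀ x, f x = ∑ i ∈ Finset.range M, x i • f (Pi.single i 1) := by
  obtain ⟨M, hM⟩ := (f.finite_setOf_map_single_ne_zero h2).bddAbove
  refine ⟨M + 1, fun x => ?_⟩
  let L : (ℕ → ℤ) →+ A := ∑ i ∈ Finset.range (M + 1),
    (zmultiplesHom A (f (Pi.single i 1))).comp (Pi.evalAddMonoidHom (fun _ => ℤ) i)
  have hL := (f - L).eq_zero_of_map_single_eq_zero h2 h3 fun j => ?_
  · simpa [sub_eq_zero, L] using DFunLike.congr_fun hL x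
  · rcases or_iff_not_imp_right.2 (fun h => hM h) with (hj : j ≤ M) | hj <;>
      simp [L, Pi.single_apply, hj]

end AddMonoidHom

lemma exists_map_apply_eq_zero_of_le (g : (ℕ → ℤ) →+ ⨁ _ : ℕ, ℤ) :
    ∃ m, ∀ x j, m ≤ j → g x j = 0 := by
  obtain ⟨M, hM⟩ := g.exists_eq_sum_range (.directSum fun _ => adicSeparated_int le_rfl)
    (.directSum fun _ => adicSeparated_int (by norm_num))
  refine ⟨(Finset.range M).sup fun i => (g (Pi.single i 1)).support.sup id + 1, fun x j hj => ?_⟩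
  rw [hM, DFinsupp.finsetSum_apply]
  refine Finset.sum_eq_zero fun i hi => ?_
  have hgij : g (Pi.single i 1) j = 0 := by
    by_contra hne
    have h₁ : j ≤ (g (Pi.single i 1)).support.sup id :=
      Finset.le_sup (f := id) (DFinsupp.mem_support_iff.2 hne)
    have h₂ := Finset.le_sup (f := fun i => (g (Pi.single i 1)).support.sup id + 1) hi
    omega
  rw [DFinsupp.smul_apply, hgij, smul_zero]

theorem not_surjective_directSum_pi (F : (⨁ _ : ℕ, ℕ → ℤ) →+ ((_ : ℕ) → ⨁ _ : ℕ, ℤ)) :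
    ¬ Function.Surjective F := by
  choose m hm using fun n k =>
    exists_map_apply_eq_zero_of_le ((Pi.evalAddMonoidHom _ k).comp (F.comp (DirectSum.of _ n)))
  let J (k : ℕ) : ℕ := (Finset.range (k + 1)).sup fun n => m n k
  have hvanish (v : ⨁ _ : ℕ, ℕ → ℤ) : ∃ N, ∀ k, N ≤ k → F v k (J k) = 0 := by
    induction v using DirectSum.induction_on with
    | zero => exact ⟨0, by simp⟩
    | of n x =>
      exact ⟨n, fun k hk => hm n k x (J k)
        (Finset.le_sup (f := fun n => m n k) (Finset.mem_range_succ_iff.2 hk))⟩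
    | add v w hv hw =>
      obtain ⟨N₁, h₁⟩ := hv
      obtain ⟨N₂, h₂⟩ := hw
      exact ⟨max N₁ N₂, fun k hk => by
        simp [h₁ k (le_of_max_le_left hk), h₂ k (le_of_max_le_right hk)]⟩
  intro hF
  obtain ⟨v, hv⟩ := hF fun k => DirectSum.of _ (J k) 1
  obtain ⟨N, hN⟩ := hvanish v
  simpa [hv] using hN N le_rfl

/-- The countable direct sum of countable direct products of `ℤ` is not isomorphic,
as an abelian group, to the countable direct product of countable direct sums of `ℤ`. -/
theorem directSum_prod_not_iso_prod_directSum :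
    ¬ Nonempty ((⨁ _ : ℕ, (ℕ → ℤ)) ≃+ ((_ : ℕ) → ⨁ _ : ℕ, ℤ)) := by
  rintro ⟨φ⟩
  exact not_surjective_directSum_pi φ.toAddMonoidHom φ.surjective
end
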